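/- Let G be a finite group acting on a unital ring B by ring automorphisms, and assume the order |G| is invertible in B. Let M be a left module over the twisted group ring B⋊G. If M is finitely generated and projective as a left B-module (via the inclusion B ⊆ B⋊G), then M is finitely generated and projective as a left B⋊G-module. -/

import Mathlib

set_option linter.unusedSectionVars false

noncomputable section

namespace Paper

variable (A : Type*) [Ring A] (G : Type*) [Group G] [MulSemiringAction G A]

/-- The twisted group ring (crossed product) `A⋊G`: the free left `A`-module with basis `G`,
with multiplication determined by `(a·g)(b·h) = (a * g(b))·(gh)`. -/
def CrossedProduct : Type _ := G →₀ A

namespace CrossedProduct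

instance : AddCommGroup (CrossedProduct A G) := inferInstanceAs (AddCommGroup (G →₀ A))

instance {k : Type*} [Semiring k] [Module k A] : Module k (CrossedProduct A G) :=
  inferInstanceAs (Module k (G →₀ A))

variable {A G}

/-- The element `a·g` of the crossed product. -/
def single (g : G) (a : A) : CrossedProduct A G := Finsupp.single g a

theorem single_add (g : G) (a b : A) :
    (single g (a + b) : CrossedProduct A G) = single g a + single g b :=
  Finsupp.single_add g a b

theorem single_zero (g : G) : (single g 0 : CrossedProduct A G) = 0 :=
  Finsupp.single_zero g

theorem induction_linear {p : CrossedProduct A G → Prop} (f : CrossedProduct A G)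
    (h0 : p 0) (hadd : ∀ f g, p f → p g → p (f + g)) (hsingle : ∀ (g : G) (a : A), p (single g a)) :
    p f :=
  Finsupp.induction_linear f h0 hadd hsingle

noncomputable instance : Mul (CrossedProduct A G) :=
  ⟨fun f h => Finsupp.sum (f : G →₀ A) fun g a =>
    Finsupp.sum (h : G →₀ A) fun g' b => Finsupp.single (g * g') (a * g • b)⟩

theorem mul_def (f h : CrossedProduct A G) :
    f * h = Finsupp.sum (f : G →₀ A) fun g a =>
      Finsupp.sum (h : G →₀ A) fun g' b =>
        (single (g * g') (a * g • b) : CrossedProduct A G) := rfl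

noncomputable instance : One (CrossedProduct A G) := ⟨single 1 1⟩

theorem one_def : (1 : CrossedProduct A G) = single 1 1 := rfl

private theorem mul_zero' (f : CrossedProduct A G) : f * 0 = 0 := by
  rw [mul_def]
  exact Finset.sum_eq_zero fun g _ => Finsupp.sum_zero_index

private theorem zero_mul' (f : CrossedProduct A G) : 0 * f = 0 :=
  Finsupp.sum_zero_index

private theorem mul_add' (f h k : CrossedProduct A G) : f * (h + k) = f * h + f * k := by
  rw [mul_def, mul_def, mul_def]
  erw [← Finsupp.sum_add]
  refine Finsupp.sum_congr fun g _ => ?_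
  exact Finsupp.sum_add_index' (f := (h : G →₀ A)) (g := k) (fun g' => by simp [single_zero])
    (fun g' b c => by simp [mul_add, smul_add, single_add])

private theorem add_mul' (f h k : CrossedProduct A G) : (f + h) * k = f * k + h * k := by
  rw [mul_def, mul_def, mul_def]
  refine (Finsupp.sum_add_index' (f := (f : G →₀ A)) (g := h) (fun g => ?_) (fun g a b => ?_)).trans rfl
  · exact Finset.sum_eq_zero fun g' _ => by simp [single_zero]
  erw [← Finsupp.sum_add]
  refine Finsupp.sum_congr fun g' _ => ?_
  simp [add_mul, single_add]

theorem single_mul_single (g g' : G) (a b : A) :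
    (single g a * single g' b : CrossedProduct A G) = single (g * g') (a * g • b) := by
  rw [mul_def]
  erw [Finsupp.sum_single_index (Finset.sum_eq_zero fun _ _ => by simp [single_zero]),
    Finsupp.sum_single_index (by simp [single_zero])]

private theorem one_mul' (f : CrossedProduct A G) : 1 * f = f := by
  induction f using induction_linear with
  | h0 => exact mul_zero' 1
  | hadd f g hf hg => rw [mul_add', hf, hg]
  | hsingle g a => rw [one_def, single_mul_single, one_mul, one_smul, one_mul]

private theorem mul_one' (f : CrossedProduct A G) : f * 1 = f := by
  induction f using induction_linear with
  | h0 => exact zero_mul' 1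
  | hadd f g hf hg => rw [add_mul', hf, hg]
  | hsingle g a => rw [one_def, single_mul_single, mul_one, smul_one, mul_one]

private theorem mul_assoc' (f h k : CrossedProduct A G) : f * h * k = f * (h * k) := by
  induction f using induction_linear with
  | h0 => rw [zero_mul', zero_mul', zero_mul']
  | hadd f₁ f₂ h₁ h₂ => rw [add_mul', add_mul', add_mul', h₁, h₂]
  | hsingle g a =>
    induction h using induction_linear with
    | h0 => rw [mul_zero', zero_mul', mul_zero']
    | hadd h₁ h₂ ih₁ ih₂ => rw [mul_add', add_mul', ih₁, ih₂, add_mul', mul_add']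
    | hsingle g' b =>
      induction k using induction_linear with
      | h0 => rw [mul_zero', mul_zero', mul_zero']
      | hadd k₁ k₂ ih₁ ih₂ => rw [mul_add', ih₁, ih₂, mul_add', mul_add']
      | hsingle g'' c =>
        rw [single_mul_single, single_mul_single, single_mul_single, single_mul_single,
          mul_assoc, mul_smul, smul_mul', mul_assoc]

noncomputable instance : Ring (CrossedProduct A G) :=
  { (inferInstanceAs (AddCommGroup (CrossedProduct A G)) : AddCommGroup (CrossedProduct A G)),
    (inferInstanceAs (Mul (CrossedProduct A G)) : Mul (CrossedProduct A G)),
    (inferInstanceAs (One (CrossedProduct A G)) : One (CrossedProduct A G)) with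
    left_distrib := mul_add'
    right_distrib := add_mul'
    zero_mul := zero_mul'
    mul_zero := mul_zero'
    mul_assoc := mul_assoc'
    one_mul := one_mul'
    mul_one := mul_one' }

/-- The canonical inclusion of `A` into the crossed product `A⋊G`. -/
noncomputable def ι : A →+* CrossedProduct A G where
  toFun a := single 1 a
  map_one' := rfl
  map_mul' a b := by rw [single_mul_single, one_mul, one_smul]
  map_zero' := single_zero 1
  map_add' a b := single_add 1 a b

end CrossedProduct

end Paper

end

/-!
A `B`-linear splitting `s` of the free presentation `(M →₀ B⋊G) → M` is averaged over the
group to `∑ g, g ∘ s ∘ g⁻¹`, which commutes with `B` and with every `g`, hence is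
`B⋊G`-linear; composed with the presentation it gives `|G| • id`, and `|G|⁻¹` is central in
`B⋊G`, so rescaling yields a `B⋊G`-linear splitting. Finite generation passes from `B` to the
larger ring `B⋊G` directly.
-/

noncomputable section

namespace Paper.CrossedProduct

variable {B : Type*} [Ring B] {G : Type*} [Group G] [MulSemiringAction G B]

theorem ι_mul_single (b : B) (g : G) (c : B) :
    ι b * single g c = (single g (b * c) : CrossedProduct B G) := by
  rw [ι, RingHom.coe_mk, MonoidHom.coe_mk, OneHom.coe_mk, single_mul_single, one_mul, one_smul]

theorem single_mul_ι (g : G) (c b : B) :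
    single g c * ι b = (single g (c * g • b) : CrossedProduct B G) := by
  rw [ι, RingHom.coe_mk, MonoidHom.coe_mk, OneHom.coe_mk, single_mul_single, mul_one]

theorem smul_single (b : B) (g : G) (c : B) :
    b • (single g c : CrossedProduct B G) = single g (b * c) :=
  Finsupp.smul_single b g c

theorem smul_eq_ι_mul (b : B) (a : CrossedProduct B G) : b • a = ι b * a := by
  induction a using induction_linear with
  | h0 => rw [smul_zero, mul_zero]
  | hadd a a' ha ha' => rw [smul_add, mul_add, ha, ha']
  | hsingle g c => rw [smul_single, ι_mul_single]

instance : IsScalarTower B (CrossedProduct B G) (CrossedProduct B G) :=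
  ⟨fun b a a' => by simp only [smul_eq_mul, smul_eq_ι_mul, mul_assoc]⟩

variable (B) in
def of (g : G) : CrossedProduct B G := single g 1

theorem single_eq_smul_of (g : G) (b : B) : single g b = b • of B g := by
  rw [of, smul_single, mul_one]

theorem of_one : of B (1 : G) = 1 :=
  rfl

theorem of_mul_of (g h : G) : of B g * of B h = of B (g * h) := by
  rw [of, of, of, single_mul_single, smul_one, mul_one]

theorem of_mul_ι (g : G) (b : B) : of B g * ι b = ι (g • b) * of B g := by
  rw [of, single_mul_ι, ι_mul_single, one_mul, mul_one]

section Module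

variable {M N : Type*}
  [AddCommGroup M] [Module B M] [Module (CrossedProduct B G) M]
  [IsScalarTower B (CrossedProduct B G) M]
  [AddCommGroup N] [Module B N] [Module (CrossedProduct B G) N]
  [IsScalarTower B (CrossedProduct B G) N]

theorem ι_smul (b : B) (m : M) : (ι b : CrossedProduct B G) • m = b • m := by
  rw [← mul_one (ι b), ← smul_eq_ι_mul, smul_assoc, one_smul]

theorem of_smul_smul (g : G) (b : B) (m : M) : of B g • b • m = (g • b) • of B g • m := by
  rw [← ι_smul (G := G) b, ← ι_smul (G := G) (g • b), smul_smul, smul_smul, of_mul_ι]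

/-- Although `g` acts on `M` and `N` only semilinearly, the two twists of the scalars cancel. -/
def conjugate (f : M →ₗ[B] N) (g : G) : M →ₗ[B] N where
  toFun m := of B g • f (of B g⁻¹ • m)
  map_add' m m' := by rw [smul_add, map_add, smul_add]
  map_smul' b m := by
    rw [RingHom.id_apply, of_smul_smul, map_smul, of_smul_smul, smul_inv_smul]

theorem conjugate_apply (f : M →ₗ[B] N) (g : G) (m : M) :
    conjugate f g m = of B g • f (of B g⁻¹ • m) :=
  rfl

def equivariantOfLinearOfComm (f : M →ₗ[B] N)
    (h : ∀ (g : G) (m : M), f (of B g • m) = of B g • f m) :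
    M →ₗ[CrossedProduct B G] N where
  toFun := f
  map_add' := f.map_add
  map_smul' a m := by
    rw [RingHom.id_apply]
    induction a using induction_linear with
    | h0 => rw [zero_smul, map_zero, zero_smul]
    | hadd a a' ha ha' => rw [add_smul, map_add, ha, ha', add_smul]
    | hsingle g b => rw [single_eq_smul_of, smul_assoc, map_smul, h, smul_assoc]

variable (G) [Fintype G]

def sumOfConjugates (f : M →ₗ[B] N) : M →ₗ[CrossedProduct B G] N :=
  equivariantOfLinearOfComm (∑ g : G, conjugate f g) fun h m => by
    simp only [LinearMap.sum_apply, conjugate_apply, Finset.smul_sum, smul_smul, of_mul_of]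
    refine Fintype.sum_bijective (h⁻¹ * ·) (Group.mulLeft_bijective h⁻¹) _ _ fun g => ?_
    rw [mul_inv_rev, inv_inv, mul_inv_cancel_left]

theorem sumOfConjugates_apply (f : M →ₗ[B] N) (m : M) :
    sumOfConjugates G f m = ∑ g : G, of B g • f (of B g⁻¹ • m) :=
  LinearMap.sum_apply _ _ _

theorem map_sumOfConjugates_of_leftInverse (p : N →ₗ[CrossedProduct B G] M) (f : M →ₗ[B] N)
    (h : Function.LeftInverse p f) (m : M) :
    p (sumOfConjugates G f m) = Fintype.card G • m := by
  simp only [sumOfConjugates_apply, map_sum, map_smul, h _, smul_smul, of_mul_of,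
    mul_inv_cancel, of_one, one_smul, Finset.sum_const, Finset.card_univ]

theorem projective_of_restrictScalars_projective (hcard : IsUnit (Fintype.card G : B))
    [hM : Module.Projective B M] : Module.Projective (CrossedProduct B G) M := by
  let π := Finsupp.linearCombination (CrossedProduct B G) (id : M → M)
  obtain ⟨s, hs⟩ := Module.projective_lifting_property (π.restrictScalars B) LinearMap.id
    (Finsupp.linearCombination_surjective _ Function.surjective_id)
  obtain ⟨u, hu⟩ : IsUnit (Fintype.card G : CrossedProduct B G) := by
    simpa only [map_natCast] using hcard.map (ι (G := G))
  have hcentral : (↑u⁻¹ : CrossedProduct B G) ∈ Set.center _ :=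
    Set.units_inv_mem_center (hu ▸ Set.natCast_mem_center _ _)
  refine .of_split (sumOfConjugates G s ∘ₗ Module.End.smulLeft _ hcentral) π ?_
  ext m
  have hsec : Function.LeftInverse π s := LinearMap.congr_fun hs
  rw [LinearMap.comp_apply, LinearMap.comp_apply, map_sumOfConjugates_of_leftInverse G π s hsec,
    Module.End.smulLeft_apply, ← Nat.cast_smul_eq_nsmul (CrossedProduct B G), smul_smul, ← hu,
    Units.mul_inv, one_smul, LinearMap.id_apply]

end Module

end Paper.CrossedProduct

end

open Paper Paper.CrossedProduct in
/-- Let `G` be a finite group acting on a unital ring `B` by ring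
automorphisms, with `|G|` invertible in `B`.  If a module `M` over the twisted group ring
`B⋊G` is finitely generated and projective as a left `B`-module (via the inclusion
`B ⊆ B⋊G`), then `M` is finitely generated and projective as a left `B⋊G`-module. -/
theorem crossedProduct_module_finite_projective
    {B : Type*} [Ring B] {G : Type*} [Group G] [Fintype G] [MulSemiringAction G B]
    (hcard : IsUnit ((Fintype.card G : ℕ) : B))
    (M : Type*) [AddCommGroup M] [Module (CrossedProduct B G) M]
    (hfin : letI : Module B M := Module.compHom M (ι (A := B) (G := G));
      Module.Finite B M)
    (hproj : letI : Module B M := Module.compHom M (ι (A := B) (G := G));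
      Module.Projective B M) :
    Module.Finite (CrossedProduct B G) M ∧ Module.Projective (CrossedProduct B G) M := by
  let : Module B M := Module.compHom M (ι (A := B) (G := G))
  have : IsScalarTower B (CrossedProduct B G) M :=
    ⟨fun b a m => by rw [smul_eq_ι_mul, mul_smul]; rfl⟩
  exact ⟨Module.Finite.of_restrictScalars_finite B _ M (hM := hfin),
    projective_of_restrictScalars_projective G hcard (hM := hproj)⟩
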